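/- arXiv:2404.14517 — 3 statements merged into one kernel-verified Lean document; each statement's English description precedes it below -/
import Mathlib

section
/- Let k ∈ ℕ and let u, v be finite words over a finite alphabet Σ such that tp_k(u) = tp_k(u·v) = τ. Then for every prefix w of v, tp_k(u·w) = τ. -/
set_option maxHeartbeats 1000000

namespace PrefSynth

/-! ### Possibly infinite words -/

/-- A (finite or infinite) word over alphabet `A`: positions carrying `some` letter. -/
abbrev Word (A : Type) : Type := ℕ → Option A

/-- `m` is a position of the word `w`. -/
def Word.pos {A : Type} (w : Word A) (m : ℕ) : Prop := w m ≠ none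

/-- A genuine word: its domain is downward closed. -/
def Word.Closed {A : Type} (w : Word A) : Prop :=
  ∀ i j : ℕ, i ≤ j → w j ≠ none → w i ≠ none

/-- The finite word given by a list. -/
def Word.ofList {A : Type} (l : List A) : Word A := fun i => l[i]?

/-- The infinite word given by a function. -/
def Word.ofFun {A : Type} (u : ℕ → A) : Word A := fun i => some (u i)

/-- The prefix of a word consisting of its first `n` positions; `Word.take w (m+1)`
is `w[0…m]`. -/
def Word.take {A : Type} (w : Word A) (n : ℕ) : Word A :=
  fun i => if i < n then w i else none

/-- `u` is a prefix of `v`. -/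
def Word.IsPrefix {A : Type} (u v : Word A) : Prop :=
  ∀ i, u i ≠ none → v i = u i

/-! ### Prefix first-order logic on words

Formulas in context `n`: the free variables are `Fin n`; when `n ≥ 1`, the variable
`0` is the bounding variable `x̄`, all other variables are prefix variables, and
every quantifier is of the form `∃ x < x̄` (new variables are appended at the end,
i.e. interpreted through `Fin.snoc`). -/

inductive PFm (A : Type) : ℕ → Type where
  | eq {n} : Fin n → Fin n → PFm A n
  | lt {n} : Fin n → Fin n → PFm A n
  | letter {n} : A → Fin n → PFm A n
  | and {n} : PFm A n → PFm A n → PFm A n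
  | not {n} : PFm A n → PFm A n
  | exlt {n} : PFm A (n + 2) → PFm A (n + 1)

/-- Quantifier depth. -/
def PFm.depth {A : Type} : {n : ℕ} → PFm A n → ℕ
  | _, .eq _ _ => 0
  | _, .lt _ _ => 0
  | _, .letter _ _ => 0
  | _, .and φ ψ => max φ.depth ψ.depth
  | _, .not φ => φ.depth
  | _, .exlt φ => φ.depth + 1

/-- Satisfaction of a prefFO formula in a word, under an assignment of the
free variables to positions. -/
def PFm.Sat {A : Type} (w : Word A) : {n : ℕ} → PFm A n → (Fin n → ℕ) → Prop
  | _, .eq i j, ρ => ρ i = ρ j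
  | _, .lt i j, ρ => ρ i < ρ j
  | _, .letter a i, ρ => w (ρ i) = some a
  | _, .and φ ψ, ρ => PFm.Sat w φ ρ ∧ PFm.Sat w ψ ρ
  | _, .not φ, ρ => ¬ PFm.Sat w φ ρ
  | _, .exlt φ, ρ => ∃ m : ℕ, Word.pos w m ∧ m < ρ 0 ∧ PFm.Sat w φ (Fin.snoc ρ m)

/-- prefFO sentences: start by quantifying the bounding variable, and are closed
under boolean combinations. -/
inductive PSen (A : Type) : Type where
  | exB : PFm A 1 → PSen A
  | and : PSen A → PSen A → PSen A
  | not : PSen A → PSen A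

/-- Quantifier depth of a sentence. -/
def PSen.depth {A : Type} : PSen A → ℕ
  | .exB φ => φ.depth + 1
  | .and s t => max s.depth t.depth
  | .not s => s.depth

/-- Satisfaction of a prefFO sentence in a word. -/
def PSen.Sat {A : Type} (w : Word A) : PSen A → Prop
  | .exB φ => ∃ m : ℕ, Word.pos w m ∧ PFm.Sat w φ (fun _ => m)
  | .and s t => PSen.Sat w s ∧ PSen.Sat w t
  | .not s => ¬ PSen.Sat w s

/-- The prefFO `k`-type of a word: the set of prefFO sentences of quantifier
depth at most `k` it satisfies. -/
def tp {A : Type} (k : ℕ) (w : Word A) : Set (PSen A) :=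
  {s | PSen.depth s ≤ k ∧ PSen.Sat w s}

/-- `Types_k`: the set of prefFO `k`-types of finite words over `A`. -/
def WTypes (A : Type) (k : ℕ) : Set (Set (PSen A)) :=
  {T | ∃ l : List A, T = tp k (Word.ofList l)}

/-- The relation `⪯` on types: `τ ⪯ τ'` iff some finite word of type `τ` has an
extension of type `τ'`. -/
def typeLe {A : Type} (k : ℕ) (τ τ' : Set (PSen A)) : Prop :=
  ∃ u v : List A, tp k (Word.ofList u) = τ ∧ tp k (Word.ofList (u ++ v)) = τ'

/-- Two words agree on all prefFO sentences of quantifier depth at most `k`. -/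
def prefEquiv {A : Type} (k : ℕ) (w w' : Word A) : Prop :=
  ∀ s : PSen A, PSen.depth s ≤ k → (PSen.Sat w s ↔ PSen.Sat w' s)

/-! ### Full first-order logic on words -/

inductive FOFm (A : Type) : ℕ → Type where
  | eq {n} : Fin n → Fin n → FOFm A n
  | lt {n} : Fin n → Fin n → FOFm A n
  | letter {n} : A → Fin n → FOFm A n
  | and {n} : FOFm A n → FOFm A n → FOFm A n
  | not {n} : FOFm A n → FOFm A n
  | ex {n} : FOFm A (n + 1) → FOFm A n

def FOFm.depth {A : Type} : {n : ℕ} → FOFm A n → ℕ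
  | _, .eq _ _ => 0
  | _, .lt _ _ => 0
  | _, .letter _ _ => 0
  | _, .and φ ψ => max φ.depth ψ.depth
  | _, .not φ => φ.depth
  | _, .ex φ => φ.depth + 1

def FOFm.Sat {A : Type} (w : Word A) : {n : ℕ} → FOFm A n → (Fin n → ℕ) → Prop
  | _, .eq i j, ρ => ρ i = ρ j
  | _, .lt i j, ρ => ρ i < ρ j
  | _, .letter a i, ρ => w (ρ i) = some a
  | _, .and φ ψ, ρ => FOFm.Sat w φ ρ ∧ FOFm.Sat w ψ ρ
  | _, .not φ, ρ => ¬ FOFm.Sat w φ ρ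
  | _, .ex φ, ρ => ∃ m : ℕ, Word.pos w m ∧ FOFm.Sat w φ (Fin.snoc ρ m)

/-- Two words agree on all FO sentences of quantifier depth at most `k`. -/
def foEquiv {A : Type} (k : ℕ) (w w' : Word A) : Prop :=
  ∀ s : FOFm A 0, FOFm.depth s ≤ k →
    (FOFm.Sat w s Fin.elim0 ↔ FOFm.Sat w' s Fin.elim0)

/-! ### The prefix Ehrenfeucht–Fraïssé game on words

After the first (bounding) round, pebbles are kept as matched pairs of
positions: `(m, m')` with `m` in the first word and `m'` in the second. -/

/-- The agreement condition: the correspondence between pebbled positions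
preserves equality, the order `<` and the letters. -/
def AgreeW {A : Type} (u v : Word A) (L : List (ℕ × ℕ)) : Prop :=
  ∀ p ∈ L, ∀ q ∈ L,
    ((p.1 = q.1) ↔ (p.2 = q.2)) ∧ ((p.1 < q.1) ↔ (p.2 < q.2)) ∧
    (∀ a : A, u p.1 = some a ↔ v p.2 = some a)

/-- `DupWinW u v b b' r L`: with bounding pebbles placed on `b` (in `u`) and `b'`
(in `v`), and prefix pebbles `L` already placed, Duplicator wins the game with `r`
remaining rounds. -/
def DupWinW {A : Type} (u v : Word A) (b b' : ℕ) : ℕ → List (ℕ × ℕ) → Prop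
  | 0, L => AgreeW u v ((b, b') :: L)
  | r + 1, L => AgreeW u v ((b, b') :: L) ∧
      (∀ m, Word.pos u m → m < b →
        ∃ m', Word.pos v m' ∧ m' < b' ∧ DupWinW u v b b' r ((m, m') :: L)) ∧
      (∀ m', Word.pos v m' → m' < b' →
        ∃ m, Word.pos u m ∧ m < b ∧ DupWinW u v b b' r ((m, m') :: L))

/-! ### Data words -/

/-- A move of a data word: a System action together with a System process, or an
Environment action together with an Environment process. `A`, `B` are the System
and Environment alphabets; `P`, `Q` the System and Environment process sets. -/
abbrev DMove (A B P Q : Type) : Type := (A × P) ⊕ (B × Q)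

/-- The process of a move. -/
def dproc {A B P Q : Type} : DMove A B P Q → P ⊕ Q :=
  Sum.elim (fun ap => Sum.inl ap.2) (fun bq => Sum.inr bq.2)

/-- The action of a move. -/
def dact {A B P Q : Type} : DMove A B P Q → A ⊕ B :=
  Sum.elim (fun ap => Sum.inl ap.1) (fun bq => Sum.inr bq.1)

/-- The process acting at position `m` of a data word. -/
def procAt {A B P Q : Type} (d : Word (DMove A B P Q)) (m : ℕ) : Option (P ⊕ Q) :=
  (d m).map dproc

/-- The action taken at position `m` of a data word. -/
def actAt {A B P Q : Type} (d : Word (DMove A B P Q)) (m : ℕ) : Option (A ⊕ B) :=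
  (d m).map dact

/-- Elements of the structure associated with a data word: one process element
for every process, and one element for every position. -/
abbrev Elem (P Q : Type) : Type := (P ⊕ Q) ⊕ ℕ

/-- The `∼`-class (i.e. the process) of an element of a data word. -/
def classOfE {A B P Q : Type} (d : Word (DMove A B P Q)) : Elem P Q → Option (P ⊕ Q)
  | .inl q => some q
  | .inr m => procAt d m

/-! ### Prefix first-order logic on data words

`PDW A B p b x` : formulas in a context with `p` process variables, `b` bounding
variables and `x` prefix variables.  Sentences (possibly with constants, constants
being modelled as the initial free variables) are obtained by instantiating the
contexts. -/

/-- A variable of any of the three kinds. -/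
abbrev DVar (p b x : ℕ) : Type := Fin p ⊕ (Fin b ⊕ Fin x)

inductive PDW (A B : Type) : ℕ → ℕ → ℕ → Type where
  | eq {p b x} : DVar p b x → DVar p b x → PDW A B p b x
  | procS {p b x} : Fin p → PDW A B p b x
  | procE {p b x} : Fin p → PDW A B p b x
  | letter {p b x} : (A ⊕ B) → (Fin b ⊕ Fin x) → PDW A B p b x
  | lesim {p b x} : Fin x → Fin x → PDW A B p b x
  | sim {p b x} : Fin p → DVar p b x → PDW A B p b x
  | and {p b x} : PDW A B p b x → PDW A B p b x → PDW A B p b x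
  | not {p b x} : PDW A B p b x → PDW A B p b x
  | exP {p b x} : PDW A B (p + 1) b x → PDW A B p b x
  | exB {p b x} : PDW A B p (b + 1) x → PDW A B p b x
  | exX {p b x} : Fin b → PDW A B p b (x + 1) → PDW A B p b x

/-- Quantifier depth. -/
def PDW.depth {A B : Type} : {p b x : ℕ} → PDW A B p b x → ℕ
  | _, _, _, .eq _ _ => 0
  | _, _, _, .procS _ => 0
  | _, _, _, .procE _ => 0
  | _, _, _, .letter _ _ => 0
  | _, _, _, .lesim _ _ => 0
  | _, _, _, .sim _ _ => 0
  | _, _, _, .and φ ψ => max φ.depth ψ.depth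
  | _, _, _, .not φ => φ.depth
  | _, _, _, .exP φ => φ.depth + 1
  | _, _, _, .exB φ => φ.depth + 1
  | _, _, _, .exX _ φ => φ.depth + 1

/-- Interpretation of a variable as an element of the data-word structure. -/
def interpDVar {P Q : Type} {p b x : ℕ} (ρP : Fin p → P ⊕ Q) (ρB : Fin b → ℕ)
    (ρX : Fin x → ℕ) : DVar p b x → Elem P Q
  | .inl i => Sum.inl (ρP i)
  | .inr (.inl i) => Sum.inr (ρB i)
  | .inr (.inr i) => Sum.inr (ρX i)

/-- Satisfaction of a prefFO^dw formula in a data word, under assignments of the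
process, bounding and prefix variables.  New bounding variables must be positions
lying in a fresh class (w.r.t. all present bounding variables), new prefix
variables must be `≲` their associated bounding variable. -/
def PDW.Sat {A B P Q : Type} (d : Word (DMove A B P Q)) :
    {p b x : ℕ} → PDW A B p b x → (Fin p → P ⊕ Q) → (Fin b → ℕ) → (Fin x → ℕ) → Prop
  | _, _, _, .eq v w, ρP, ρB, ρX => interpDVar ρP ρB ρX v = interpDVar ρP ρB ρX w
  | _, _, _, .procS i, ρP, _, _ => ∃ q : P, ρP i = Sum.inl q
  | _, _, _, .procE i, ρP, _, _ => ∃ q : Q, ρP i = Sum.inr q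
  | _, _, _, .letter a v, _, ρB, ρX => actAt d (Sum.elim ρB ρX v) = some a
  | _, _, _, .lesim i j, _, _, ρX =>
      ρX i < ρX j ∧ ∃ q, procAt d (ρX i) = some q ∧ procAt d (ρX j) = some q
  | _, _, _, .sim i v, ρP, ρB, ρX => classOfE d (interpDVar ρP ρB ρX v) = some (ρP i)
  | _, _, _, .and φ ψ, ρP, ρB, ρX => PDW.Sat d φ ρP ρB ρX ∧ PDW.Sat d ψ ρP ρB ρX
  | _, _, _, .not φ, ρP, ρB, ρX => ¬ PDW.Sat d φ ρP ρB ρX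
  | _, _, _, .exP φ, ρP, ρB, ρX => ∃ q : P ⊕ Q, PDW.Sat d φ (Fin.snoc ρP q) ρB ρX
  | _, _, _, .exB φ, ρP, ρB, ρX => ∃ m : ℕ, d m ≠ none ∧
      (∀ j, procAt d m ≠ procAt d (ρB j)) ∧ PDW.Sat d φ ρP (Fin.snoc ρB m) ρX
  | _, _, _, .exX y φ, ρP, ρB, ρX => ∃ m : ℕ, d m ≠ none ∧ m < ρB y ∧
      procAt d m = procAt d (ρB y) ∧ PDW.Sat d φ ρP ρB (Fin.snoc ρX m)

/-- Satisfaction of a prefFO^dw sentence (no constants) in a data word. -/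
def SatS {A B P Q : Type} (d : Word (DMove A B P Q)) (φ : PDW A B 0 0 0) : Prop :=
  PDW.Sat d φ Fin.elim0 Fin.elim0 Fin.elim0

/-! ### Classes of a data word -/

/-- `m` is a position of process `q` in the data word `d`. -/
def isPosOf {A B P Q : Type} (d : Word (DMove A B P Q)) (q : P ⊕ Q) (m : ℕ) : Prop :=
  procAt d m = some q

open Classical in
/-- The class of process `q` in the data word `d`, as a (finite or infinite) word
over `A ⊕ B`: its `i`-th letter is the action taken at the `i`-th position of `q`. -/
noncomputable def classWord {A B P Q : Type} (d : Word (DMove A B P Q)) (q : P ⊕ Q) :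
    Word (A ⊕ B) :=
  fun i =>
    if {m | isPosOf d q m}.Infinite ∨ i < Set.ncard {m | isPosOf d q m}
    then actAt d (Nat.nth (isPosOf d q) i) else none

/-- The set of processes of `d` whose class has prefFO `k`-type `τ`. -/
def classesOfType {A B P Q : Type} (d : Word (DMove A B P Q)) (k : ℕ)
    (τ : Set (PSen (A ⊕ B))) : Set (P ⊕ Q) :=
  {q | tp k (classWord d q) = τ}

end PrefSynth
/-! ### The prefix Ehrenfeucht–Fraïssé game on data words (with constants) -/

namespace PrefSynth

/-- A pebble placed on a data word: a process pebble, a bounding pebble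
or a prefix pebble. -/
inductive Peb (P Q : Type) : Type where
  | proc : P ⊕ Q → Peb P Q
  | bound : ℕ → Peb P Q
  | pref : ℕ → Peb P Q

/-- The element on which a pebble is placed. -/
def Peb.elem {P Q : Type} : Peb P Q → Elem P Q
  | .proc q => Sum.inl q
  | .bound m => Sum.inr m
  | .pref m => Sum.inr m

/-- `e` is a System process element. -/
def IsProcSE {P Q : Type} (e : Elem P Q) : Prop := ∃ q : P, e = Sum.inl (Sum.inl q)

/-- `e` is an Environment process element. -/
def IsProcEE {P Q : Type} (e : Elem P Q) : Prop := ∃ q : Q, e = Sum.inl (Sum.inr q)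

/-- `e` is a position labelled by the letter `a`. -/
def LetterIsE {A B P Q : Type} (d : Word (DMove A B P Q)) (e : Elem P Q) (a : A ⊕ B) :
    Prop := ∃ m : ℕ, e = Sum.inr m ∧ actAt d m = some a

/-- `e ∼ f` in the data word `d`. -/
def SimE {A B P Q : Type} (d : Word (DMove A B P Q)) (e f : Elem P Q) : Prop :=
  ∃ q, classOfE d e = some q ∧ classOfE d f = some q

/-- `e ≲ f` in the data word `d`. -/
def LesimE {A B P Q : Type} (d : Word (DMove A B P Q)) (e f : Elem P Q) : Prop :=
  ∃ m m' : ℕ, e = Sum.inr m ∧ f = Sum.inr m' ∧ m < m' ∧ SimE d e f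

/-- Agreement of a correspondence between elements of two data words: it must
preserve equality, `Proc_S`, `Proc_E`, the letters, `≲` and `∼`. -/
def AgreeDW {A B P Q P' Q' : Type} (d : Word (DMove A B P Q))
    (d' : Word (DMove A B P' Q')) (E : List (Elem P Q × Elem P' Q')) : Prop :=
  ∀ e ∈ E, ∀ f ∈ E,
    ((e.1 = f.1) ↔ (e.2 = f.2)) ∧
    (IsProcSE e.1 ↔ IsProcSE e.2) ∧
    (IsProcEE e.1 ↔ IsProcEE e.2) ∧
    (∀ a : A ⊕ B, LetterIsE d e.1 a ↔ LetterIsE d' e.2 a) ∧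
    (LesimE d e.1 f.1 ↔ LesimE d' e.2 f.2) ∧
    (SimE d e.1 f.1 ↔ SimE d' e.2 f.2)

/-- A legal bounding move: a position whose class contains no previously placed
bounding pebble (from `l`) and no bounding constant (from `B0`). -/
def LegalBound {A B P Q : Type} (d : Word (DMove A B P Q)) (B0 : List ℕ)
    (l : List (Peb P Q)) (m : ℕ) : Prop :=
  d m ≠ none ∧ (∀ m₀ : ℕ, Peb.bound m₀ ∈ l → procAt d m ≠ procAt d m₀) ∧
    (∀ m₀ ∈ B0, procAt d m ≠ procAt d m₀)

/-- A legal prefix move: a position such that some previously placed bounding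
pebble or bounding constant lies in the same class, at a later position. -/
def LegalPref {A B P Q : Type} (d : Word (DMove A B P Q)) (B0 : List ℕ)
    (l : List (Peb P Q)) (m : ℕ) : Prop :=
  d m ≠ none ∧
    ∃ m₀ : ℕ, (Peb.bound m₀ ∈ l ∨ m₀ ∈ B0) ∧ m < m₀ ∧ procAt d m = procAt d m₀

/-- The matched pairs of elements determined by the constants `E0` and the
pebbles `L`. -/
def pairElems {P Q P' Q' : Type} (E0 : List (Elem P Q × Elem P' Q'))
    (L : List (Peb P Q × Peb P' Q')) : List (Elem P Q × Elem P' Q') :=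
  E0 ++ L.map (fun pq => (pq.1.elem, pq.2.elem))

/-- `DupWinDW d d' E0 B0 B0' r L`: Duplicator wins the `r`-round prefix EF game on
the data words `d` and `d'` with matched constant elements `E0` (the bounding
constants being interpreted by `B0` in `d` and by `B0'` in `d'`) and already
placed matched pebbles `L`. -/
def DupWinDW {A B P Q P' Q' : Type} (d : Word (DMove A B P Q))
    (d' : Word (DMove A B P' Q')) (E0 : List (Elem P Q × Elem P' Q'))
    (B0 B0' : List ℕ) : ℕ → List (Peb P Q × Peb P' Q') → Prop
  | 0, L => AgreeDW d d' (pairElems E0 L)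
  | r + 1, L => AgreeDW d d' (pairElems E0 L) ∧
      (∀ q : P ⊕ Q, ∃ q' : P' ⊕ Q',
        DupWinDW d d' E0 B0 B0' r ((Peb.proc q, Peb.proc q') :: L)) ∧
      (∀ q' : P' ⊕ Q', ∃ q : P ⊕ Q,
        DupWinDW d d' E0 B0 B0' r ((Peb.proc q, Peb.proc q') :: L)) ∧
      (∀ m : ℕ, LegalBound d B0 (L.map Prod.fst) m →
        ∃ m' : ℕ, LegalBound d' B0' (L.map Prod.snd) m' ∧
          DupWinDW d d' E0 B0 B0' r ((Peb.bound m, Peb.bound m') :: L)) ∧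
      (∀ m' : ℕ, LegalBound d' B0' (L.map Prod.snd) m' →
        ∃ m : ℕ, LegalBound d B0 (L.map Prod.fst) m ∧
          DupWinDW d d' E0 B0 B0' r ((Peb.bound m, Peb.bound m') :: L)) ∧
      (∀ m : ℕ, LegalPref d B0 (L.map Prod.fst) m →
        ∃ m' : ℕ, LegalPref d' B0' (L.map Prod.snd) m' ∧
          DupWinDW d d' E0 B0 B0' r ((Peb.pref m, Peb.pref m') :: L)) ∧
      (∀ m' : ℕ, LegalPref d' B0' (L.map Prod.snd) m' →
        ∃ m : ℕ, LegalPref d B0 (L.map Prod.fst) m ∧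
          DupWinDW d d' E0 B0 B0' r ((Peb.pref m, Peb.pref m') :: L))

/-- The constants of a data word: interpretations of `cp` process constants,
`cb` bounding constants and `cx` prefix constants.  Validity: bounding and
prefix constants are positions, no two bounding constants share a class, and
each prefix constant is `≲` some bounding constant. -/
def ValidConsts {A B P Q : Type} {cp cb cx : ℕ} (d : Word (DMove A B P Q))
    (γP : Fin cp → P ⊕ Q) (γB : Fin cb → ℕ) (γX : Fin cx → ℕ) : Prop :=
  (∀ j, d (γB j) ≠ none) ∧ (∀ j, d (γX j) ≠ none) ∧
  (∀ i j, i ≠ j → procAt d (γB i) ≠ procAt d (γB j)) ∧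
  (∀ i, ∃ j, γX i < γB j ∧ procAt d (γX i) = procAt d (γB j))

/-- The matched constant elements determined by two interpretations of the same
constant symbols. -/
def constPairs {P Q P' Q' : Type} {cp cb cx : ℕ}
    (γP : Fin cp → P ⊕ Q) (γB : Fin cb → ℕ) (γX : Fin cx → ℕ)
    (γP' : Fin cp → P' ⊕ Q') (γB' : Fin cb → ℕ) (γX' : Fin cx → ℕ) :
    List (Elem P Q × Elem P' Q') :=
  (List.ofFn fun i : Fin cp =>
    ((Sum.inl (γP i) : Elem P Q), (Sum.inl (γP' i) : Elem P' Q'))) ++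
  (List.ofFn fun i : Fin cb =>
    ((Sum.inr (γB i) : Elem P Q), (Sum.inr (γB' i) : Elem P' Q'))) ++
  (List.ofFn fun i : Fin cx =>
    ((Sum.inr (γX i) : Elem P Q), (Sum.inr (γX' i) : Elem P' Q')))

/-! ### The standard synthesis game -/

/-- A System strategy in the standard synthesis game: given the finite data word
played so far, output a System action and process, or pass (`none` plays the
role of `ε`). -/
abbrev Strat (A B P Q : Type) : Type := List (DMove A B P Q) → Option (A × P)

/-- The list of the first `n` moves of a data word. -/
def histList {M : Type} (d : Word M) (n : ℕ) : List M := (List.range n).filterMap d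

/-- The data word `d` is compatible with the System strategy `σ`. -/
def CompatibleStd {A B P Q : Type} (σ : Strat A B P Q) (d : Word (DMove A B P Q)) :
    Prop :=
  ∀ i a p, d i = some (Sum.inl (a, p)) → σ (histList d i) = some (a, p)

/-- The data word `d` is fair with respect to `σ`: either it is finite and `σ`
passes after it, or (being infinite) if `σ` wants to play infinitely often then
System actions occur infinitely often. -/
def FairStd {A B P Q : Type} (σ : Strat A B P Q) (d : Word (DMove A B P Q)) : Prop :=
  (∃ n, d n = none ∧ (∀ i, i < n → d i ≠ none) ∧ σ (histList d n) = none) ∨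
  ((∀ n, d n ≠ none) ∧
    ((∀ N, ∃ i, N ≤ i ∧ σ (histList d (i + 1)) ≠ none) →
     (∀ N, ∃ i, N ≤ i ∧ ∃ a p, d i = some (Sum.inl (a, p)))))

/-- `σ` is winning for `φ` in the standard synthesis game: every compatible and
fair data word satisfies `φ`. -/
def WinningStd {A B P Q : Type} (φ : PDW A B 0 0 0) (σ : Strat A B P Q) : Prop :=
  ∀ d : Word (DMove A B P Q), Word.Closed d → CompatibleStd σ d → FairStd σ d →
    SatS d φ

/-- System has an `(nS, nE)`-winning strategy for `φ` in the standard synthesis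
game: a winning strategy whenever `|P_S| = nS` and `|P_E| = nE`. -/
def SystemWinsStd (A B : Type) (φ : PDW A B 0 0 0) (nS nE : ℕ) : Prop :=
  ∀ (P Q : Type), Finite P → Finite Q → Nat.card P = nS → Nat.card Q = nE →
    ∃ σ : Strat A B P Q, WinningStd φ σ

/-! ### The symmetric game -/

/-- A System strategy in the symmetric game: may answer by any finite sequence
of System moves (`[]` playing the role of `ε`). -/
abbrev SymStrat (A B P Q : Type) : Type := List (DMove A B P Q) → List (A × P)

/-- The history after `n` rounds of the symmetric game, the Environment playing
the finite blocks `env 0, env 1, …` and System answering according to `σ`,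
with strict alternation, Environment first. -/
def symHist {A B P Q : Type} (σ : SymStrat A B P Q) (env : ℕ → List (B × Q)) :
    ℕ → List (DMove A B P Q)
  | 0 => []
  | n + 1 =>
      let h := symHist σ env n ++ (env n).map Sum.inr
      h ++ (σ h).map Sum.inl

/-- The data word `d` is compatible with the symmetric strategy `σ`: it is the
limit of the histories of an alternating play in which System follows `σ`. -/
def CompatibleSym {A B P Q : Type} (σ : SymStrat A B P Q)
    (d : Word (DMove A B P Q)) : Prop :=
  ∃ env : ℕ → List (B × Q),
    (∀ n i x, (symHist σ env n)[i]? = some x → d i = some x) ∧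
    (∀ i, d i ≠ none → ∃ n, i < (symHist σ env n).length)

/-- Fairness in the symmetric game: if `d` is finite then `σ` passes after it. -/
def FairSym {A B P Q : Type} (σ : SymStrat A B P Q) (d : Word (DMove A B P Q)) :
    Prop :=
  ∀ n, d n = none → (∀ i, i < n → d i ≠ none) → σ (histList d n) = []

/-- `σ` is winning for `φ` in the symmetric game. -/
def WinningSym {A B P Q : Type} (φ : PDW A B 0 0 0) (σ : SymStrat A B P Q) : Prop :=
  ∀ d : Word (DMove A B P Q), Word.Closed d → CompatibleSym σ d → FairSym σ d →
    SatS d φ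

/-- System has an `(nS, nE)`-winning strategy for `φ` in the symmetric game. -/
def SystemWinsSym (A B : Type) (φ : PDW A B 0 0 0) (nS nE : ℕ) : Prop :=
  ∀ (P Q : Type), Finite P → Finite Q → Nat.card P = nS → Nat.card Q = nE →
    ∃ σ : SymStrat A B P Q, WinningSym φ σ

/-! ### The token game on types -/

/-- A node of the arena: a prefFO `k`-type of finite words. -/
abbrev Typ (A : Type) (k : ℕ) : Type := {T : Set (PSen A) // T ∈ WTypes A k}

/-- The initial node: the type of the empty word. -/
def initTyp (A : Type) (k : ℕ) : Typ A k :=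
  ⟨tp k (Word.ofList ([] : List A)), ⟨[], rfl⟩⟩

/-- The transition relation of the arena. -/
def typLe {A : Type} {k : ℕ} (τ τ' : Typ A k) : Prop := typeLe k τ.1 τ'.1

/-- A configuration: the position of each token in the arena.  `TS` and `TE` are
the sets of System and Environment tokens. -/
abbrev Conf (A : Type) (k : ℕ) (TS TE : Type) : Type := (TS ⊕ TE) → Typ A k

/-- A System strategy in the token game: given the sequence of configurations
so far, where to move each System token. -/
abbrev TokStrat (A : Type) (k : ℕ) (TS TE : Type) : Type :=
  List (Conf A k TS TE) → TS → Typ A k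

/-- A play of the token game: all tokens start on the initial node, tokens only
move along `⪯`, and the players strictly alternate, Environment first (at even
stages Environment moves, so System tokens stay put; at odd stages System moves). -/
def IsPlay {A : Type} {k : ℕ} {TS TE : Type} (conf : ℕ → Conf A k TS TE) : Prop :=
  (∀ t, conf 0 t = initTyp A k) ∧
  (∀ n t, typLe (conf n t) (conf (n + 1) t)) ∧
  (∀ n, Even n → ∀ t : TS, conf (n + 1) (Sum.inl t) = conf n (Sum.inl t)) ∧
  (∀ n, ¬ Even n → ∀ t : TE, conf (n + 1) (Sum.inr t) = conf n (Sum.inr t))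

/-- The play `conf` is compatible with the System strategy `σ`. -/
def CompatibleTok {A : Type} {k : ℕ} {TS TE : Type} (σ : TokStrat A k TS TE)
    (conf : ℕ → Conf A k TS TE) : Prop :=
  ∀ n, ¬ Even n → ∀ t : TS,
    conf (n + 1) (Sum.inl t) = σ (List.ofFn (fun i : Fin (n + 1) => conf i)) t

/-- The strategy `σ` only suggests legal moves (along `⪯`). -/
def StratLegal {A : Type} {k : ℕ} {TS TE : Type} (σ : TokStrat A k TS TE) : Prop :=
  ∀ (h : List (Conf A k TS TE)) (hne : h ≠ []) (t : TS),
    typLe (h.getLast hne (Sum.inl t)) (σ h t)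

/-- A configuration matches a `k`-counting function `c` (values `≥ k`
representing `k+`): the number of tokens on each type `τ` is exactly `c τ` when
`c τ < k`, and at least `k` otherwise. -/
def CfgMatches {A : Type} {k : ℕ} {TS TE : Type} (c : Typ A k → ℕ)
    (cfg : Conf A k TS TE) : Prop :=
  ∀ τ : Typ A k,
    (c τ < k → Nat.card {t : TS ⊕ TE // cfg t = τ} = c τ) ∧
    (¬ c τ < k → k ≤ Nat.card {t : TS ⊕ TE // cfg t = τ})

/-- The acceptance set `Acc_φ`: the `k`-counting functions `c` such that every
data word whose numbers of classes of each prefFO `k`-type match `c` satisfies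
`φ`. -/
def AccC (A B : Type) (k : ℕ) (φ : PDW A B 0 0 0) (c : Typ (A ⊕ B) k → ℕ) : Prop :=
  (∀ τ, c τ ≤ k) ∧
  ∀ (P Q : Type) (d : Word (DMove A B P Q)), Word.Closed d →
    (∀ τ : Typ (A ⊕ B) k,
      (c τ < k → Cardinal.mk ↥(classesOfType d k τ.1) = (c τ : Cardinal)) ∧
      (¬ c τ < k → (k : Cardinal) ≤ Cardinal.mk ↥(classesOfType d k τ.1))) →
    SatS d φ

/-- The strategy `σ` is winning in the token game for `φ`: every compatible
maximal play stabilizes in a limit configuration satisfying the acceptance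
condition. -/
def TokWinning {A B : Type} {k : ℕ} {TS TE : Type} (φ : PDW A B 0 0 0)
    (σ : TokStrat (A ⊕ B) k TS TE) : Prop :=
  ∀ conf : ℕ → Conf (A ⊕ B) k TS TE, IsPlay conf → CompatibleTok σ conf →
    ∃ N, (∀ n, N ≤ n → conf n = conf N) ∧
      ∃ c : Typ (A ⊕ B) k → ℕ, AccC A B k φ c ∧ CfgMatches c (conf N)

/-- The pair `(nS, nE)` is winning for System in the token game for `φ` (of
depth `k`). -/
def SystemWinsTok (A B : Type) (k : ℕ) (φ : PDW A B 0 0 0) (nS nE : ℕ) : Prop :=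
  ∀ (TS TE : Type), Finite TS → Finite TE → Nat.card TS = nS → Nat.card TE = nE →
    ∃ σ : TokStrat (A ⊕ B) k TS TE, StratLegal σ ∧ TokWinning φ σ

/-! ### An explicit encoding of prefFO^dw sentences, for decidability -/

/-- Encoding of a variable. -/
def encodeDVar {p b x : ℕ} : DVar p b x → ℕ
  | .inl i => Nat.pair 0 i.1
  | .inr (.inl i) => Nat.pair 1 i.1
  | .inr (.inr i) => Nat.pair 2 i.1

/-- An explicit injective encoding of prefFO^dw formulas over the alphabets
`Fin m` and `Fin n` into the natural numbers. -/
def encodePDW {m n : ℕ} : {p b x : ℕ} → PDW (Fin m) (Fin n) p b x → ℕ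
  | _, _, _, .eq v w => Nat.pair 0 (Nat.pair (encodeDVar v) (encodeDVar w))
  | _, _, _, .procS i => Nat.pair 1 i.1
  | _, _, _, .procE i => Nat.pair 2 i.1
  | _, _, _, .letter a v =>
      Nat.pair 3 (Nat.pair
        (Sum.elim (fun i => Nat.pair 0 i.1) (fun j => Nat.pair 1 j.1) a)
        (Sum.elim (fun i => Nat.pair 0 i.1) (fun j => Nat.pair 1 j.1) v))
  | _, _, _, .lesim i j => Nat.pair 4 (Nat.pair i.1 j.1)
  | _, _, _, .sim i v => Nat.pair 5 (Nat.pair i.1 (encodeDVar v))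
  | _, _, _, .and φ ψ => Nat.pair 6 (Nat.pair (encodePDW φ) (encodePDW ψ))
  | _, _, _, .not φ => Nat.pair 7 (encodePDW φ)
  | _, _, _, .exP φ => Nat.pair 8 (encodePDW φ)
  | _, _, _, .exB φ => Nat.pair 9 (encodePDW φ)
  | _, _, _, .exX y φ => Nat.pair 10 (Nat.pair y.1 (encodePDW φ))

end PrefSynth

/-! A sentence `∃ x̄, φ` only inspects positions up to `x̄`, so once true it stays true in every
extension of the word. Sentences of depth at most `k` are boolean combinations of such, and if
`u` and `u·v` agree on all of them, then for `u ≤ u·w ≤ u·v` each of these sentences, being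
monotone, is squeezed to the same truth value in `u·w`. -/

namespace PrefSynth

namespace Word

variable {A : Type}

theorem pos_ofList {l : List A} {i : ℕ} : (ofList l).pos i ↔ i < l.length := by
  simp [pos, ofList]

theorem closed_ofList (l : List A) : (ofList l).Closed := fun _ _ hij hj =>
  pos_ofList.2 (lt_of_le_of_lt hij (pos_ofList.1 hj))

theorem isPrefix_ofList {l₁ l₂ : List A} (h : l₁ <+: l₂) : (ofList l₁).IsPrefix (ofList l₂) := by
  obtain ⟨t, rfl⟩ := h
  intro i hi
  simp [ofList, List.getElem?_append_left (pos_ofList.1 hi)]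

end Word

section

variable {A : Type} {w₁ w₂ : Word A}

theorem PFm.sat_iff_of_isPrefix (hc : w₁.Closed) (h : w₁.IsPrefix w₂) :
    ∀ {n : ℕ} (φ : PFm A n) (ρ : Fin n → ℕ), (∀ i, w₁.pos (ρ i)) →
      (φ.Sat w₁ ρ ↔ φ.Sat w₂ ρ) := by
  intro n φ
  induction φ with
  | eq | lt => exact fun _ _ => Iff.rfl
  | letter a i => exact fun ρ hρ => by simp only [PFm.Sat, h _ (hρ i)]
  | and φ ψ ihφ ihψ => exact fun ρ hρ => and_congr (ihφ ρ hρ) (ihψ ρ hρ)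
  | not φ ih => exact fun ρ hρ => not_congr (ih ρ hρ)
  | exlt φ ih =>
    intro ρ hρ
    have hsnoc : ∀ m, w₁.pos m → ∀ i, w₁.pos ((Fin.snoc ρ m : Fin _ → ℕ) i) := fun m hm i =>
      Fin.lastCases (by simpa using hm) (fun j => by simpa using hρ j) i
    constructor
    · rintro ⟨m, hm, hlt, hφ⟩
      exact ⟨m, by rwa [Word.pos, h m hm], hlt, (ih _ (hsnoc m hm)).1 hφ⟩
    · rintro ⟨m, -, hlt, hφ⟩
      have hm : w₁.pos m := hc m (ρ 0) hlt.le (hρ 0)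
      exact ⟨m, hm, hlt, (ih _ (hsnoc m hm)).2 hφ⟩

theorem PSen.sat_exB_of_isPrefix (hc : w₁.Closed) (h : w₁.IsPrefix w₂) {φ : PFm A 1}
    (hφ : (PSen.exB φ).Sat w₁) : (PSen.exB φ).Sat w₂ := by
  obtain ⟨m, hm, hφ⟩ := hφ
  exact ⟨m, by rwa [Word.pos, h m hm], (PFm.sat_iff_of_isPrefix hc h φ _ fun _ => hm).1 hφ⟩

theorem prefEquiv_of_forall_exB {k : ℕ}
    (h : ∀ φ : PFm A 1, φ.depth + 1 ≤ k → ((PSen.exB φ).Sat w₁ ↔ (PSen.exB φ).Sat w₂)) :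
    prefEquiv k w₁ w₂ := by
  intro s
  induction s with
  | exB φ => exact h φ
  | and s t ihs iht =>
    intro hd
    rw [PSen.depth, max_le_iff] at hd
    exact and_congr (ihs hd.1) (iht hd.2)
  | not s ih => exact fun hd => not_congr (ih hd)

theorem tp_eq_iff_prefEquiv {k : ℕ} : tp k w₁ = tp k w₂ ↔ prefEquiv k w₁ w₂ := by
  simp only [Set.ext_iff, tp, Set.mem_ofPred_eq, prefEquiv]
  exact ⟨fun h s hs => by simpa [hs] using h s, fun h s => and_congr_right (h s)⟩

theorem prefEquiv_of_isPrefix_of_isPrefix {k : ℕ} {w₃ : Word A} (hc₁ : w₁.Closed)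
    (hc₂ : w₂.Closed) (h₁₂ : w₁.IsPrefix w₂) (h₂₃ : w₂.IsPrefix w₃) (h₁₃ : prefEquiv k w₁ w₃) :
    prefEquiv k w₁ w₂ :=
  prefEquiv_of_forall_exB fun φ hφ =>
    ⟨PSen.sat_exB_of_isPrefix hc₁ h₁₂,
      fun h₂ => (h₁₃ (.exB φ) hφ).2 (PSen.sat_exB_of_isPrefix hc₂ h₂₃ h₂)⟩

end

theorem tp_sandwich_general {A : Type} (k : ℕ) (u v : List A)
    (τ : Set (PSen A))
    (h1 : tp k (Word.ofList u) = τ) (h2 : tp k (Word.ofList (u ++ v)) = τ) :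
    ∀ w : List A, w <+: v → tp k (Word.ofList (u ++ w)) = τ := by
  intro w hw
  have huv : prefEquiv k (Word.ofList u) (Word.ofList (u ++ v)) :=
    tp_eq_iff_prefEquiv.1 (h1.trans h2.symm)
  have huw : prefEquiv k (Word.ofList u) (Word.ofList (u ++ w)) :=
    prefEquiv_of_isPrefix_of_isPrefix (Word.closed_ofList _) (Word.closed_ofList _)
      (Word.isPrefix_ofList (List.prefix_append u w))
      (Word.isPrefix_ofList ((List.prefix_append_right_inj u).2 hw)) huv
  exact (tp_eq_iff_prefEquiv.2 huw).symm.trans h1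

/-- If `tp_k(u) = tp_k(u·v) = τ` then for every prefix `w` of
`v`, `tp_k(u·w) = τ`. -/
theorem tp_sandwich {A : Type} [Finite A] (k : ℕ) (u v : List A)
    (τ : Set (PSen A))
    (h1 : tp k (Word.ofList u) = τ) (h2 : tp k (Word.ofList (u ++ v)) = τ) :
    ∀ w : List A, w <+: v → tp k (Word.ofList (u ++ w)) = τ :=
  tp_sandwich_general k u v τ h1 h2

end PrefSynth
end

section
/- For every k ∈ ℕ and every infinite word u over a finite alphabet Σ, there exist a unique type τ ∈ Types_k and an index n ∈ ℕ such that for every m ≥ n, tp_k(u[0…m]) = τ. (This τ is called the stationary type of u.) -/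
set_option maxHeartbeats 1000000

namespace PrefSynth

/-! A prefFO sentence `∃ x̄, φ(x̄)` of depth `k + 1` only sees which Hintikka `k`-types are
realised by single positions `x̄ = m`, and since every further quantifier ranges below `x̄`, the
type realised by `m` only depends on the prefix `w[0…m]`. Along the prefixes of an infinite
word these sets of local types grow inside the finite set of Hintikka types, so they eventually
exhaust all local types occurring in the word; from then on the prefFO `k`-type of the prefix
is constant. -/

abbrev AtomType (A : Type) (c : ℕ) : Type :=
  (Fin c → Fin c → Prop) × (Fin c → Fin c → Prop) × (Fin c → Option A)

def atomType {A : Type} {c : ℕ} (w : Word A) (ρ : Fin c → ℕ) : AtomType A c :=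
  (fun i j => ρ i = ρ j, fun i j => ρ i < ρ j, fun i => w (ρ i))

/-- Hintikka `k`-types of assignments `Fin (n + 1) → ℕ`, where variable `0` is the bounding
variable. -/
def HType (A : Type) : ℕ → ℕ → Type
  | 0, n => AtomType A (n + 1)
  | k + 1, n => AtomType A (n + 1) × Set (HType A k (n + 1))

instance HType.finite (A : Type) [Finite A] : ∀ k n : ℕ, Finite (HType A k n)
  | 0, n => inferInstanceAs (Finite (AtomType A (n + 1)))
  | k + 1, n =>
    have := HType.finite A k (n + 1)
    inferInstanceAs (Finite (AtomType A (n + 1) × Set (HType A k (n + 1))))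

def hType {A : Type} : (k n : ℕ) → Word A → (Fin (n + 1) → ℕ) → HType A k n
  | 0, _, w, ρ => atomType w ρ
  | k + 1, n, w, ρ =>
    (atomType w ρ, {t | ∃ m, w.pos m ∧ m < ρ 0 ∧ hType k (n + 1) w (Fin.snoc ρ m) = t})

lemma atomType_eq_of_hType_eq {A : Type} {k n : ℕ} {w w' : Word A} {ρ ρ' : Fin (n + 1) → ℕ}
    (h : hType k n w ρ = hType k n w' ρ') : atomType w ρ = atomType w' ρ' := by
  cases k with
  | zero => exact h
  | succ k => exact congrArg Prod.fst h

lemma atomType_eq_iff {A : Type} {c : ℕ} {w w' : Word A} {ρ ρ' : Fin c → ℕ} :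
    atomType w ρ = atomType w' ρ' ↔ (∀ i j, ρ i = ρ j ↔ ρ' i = ρ' j) ∧
      (∀ i j, ρ i < ρ j ↔ ρ' i < ρ' j) ∧ ∀ i, w (ρ i) = w' (ρ' i) := by
  simp only [atomType, Prod.mk.injEq, funext_iff, eq_iff_iff]

theorem PFm.sat_iff_of_hType_eq {A : Type} {k : ℕ} {w w' : Word A} :
    ∀ {n : ℕ} (φ : PFm A (n + 1)), φ.depth ≤ k → ∀ {ρ ρ' : Fin (n + 1) → ℕ},
      hType k n w ρ = hType k n w' ρ' → (φ.Sat w ρ ↔ φ.Sat w' ρ')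
  | _, .eq i j, _, _, _, h => (atomType_eq_iff.mp (atomType_eq_of_hType_eq h)).1 i j
  | _, .lt i j, _, _, _, h => (atomType_eq_iff.mp (atomType_eq_of_hType_eq h)).2.1 i j
  | _, .letter a i, _, _, _, h => by
    simp only [PFm.Sat, (atomType_eq_iff.mp (atomType_eq_of_hType_eq h)).2.2 i]
  | _, .and φ ψ, hd, _, _, h => by
    simp only [PFm.depth, max_le_iff] at hd
    simp only [PFm.Sat, sat_iff_of_hType_eq φ hd.1 h, sat_iff_of_hType_eq ψ hd.2 h]
  | _, .not φ, hd, _, _, h => by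
    simp only [PFm.Sat, sat_iff_of_hType_eq φ hd h]
  | _, .exlt φ, hd, ρ, ρ', h => by
    obtain ⟨k, rfl⟩ : ∃ k', k = k' + 1 := ⟨k - 1, by simp only [PFm.depth] at hd; omega⟩
    have hφ : φ.depth ≤ k := by simp only [PFm.depth] at hd; omega
    have hext := Set.ext_iff.mp (congrArg Prod.snd h)
    simp only [hType] at hext
    simp only [PFm.Sat]
    constructor
    · rintro ⟨m, hm, hlt, hs⟩
      obtain ⟨m', hm', hlt', ht⟩ := (hext _).mp ⟨m, hm, hlt, rfl⟩
      exact ⟨m', hm', hlt', (sat_iff_of_hType_eq φ hφ ht.symm).mp hs⟩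
    · rintro ⟨m', hm', hlt', hs⟩
      obtain ⟨m, hm, hlt, ht⟩ := (hext _).mpr ⟨m', hm', hlt', rfl⟩
      exact ⟨m, hm, hlt, (sat_iff_of_hType_eq φ hφ ht).mpr hs⟩

def localTypes {A : Type} (k : ℕ) (w : Word A) : Set (HType A k 0) :=
  {t | ∃ m, w.pos m ∧ hType k 0 w (fun _ => m) = t}

theorem PSen.sat_iff_of_localTypes_eq {A : Type} {k : ℕ} {w w' : Word A}
    (h : localTypes k w = localTypes k w') : ∀ s : PSen A, s.depth ≤ k + 1 →
      (s.Sat w ↔ s.Sat w')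
  | .exB φ, hd => by
    have hφ : φ.depth ≤ k := by simp only [PSen.depth] at hd; omega
    have hext := Set.ext_iff.mp h
    simp only [localTypes] at hext
    simp only [PSen.Sat]
    constructor
    · rintro ⟨m, hm, hs⟩
      obtain ⟨m', hm', ht⟩ := (hext _).mp ⟨m, hm, rfl⟩
      exact ⟨m', hm', (φ.sat_iff_of_hType_eq hφ ht.symm).mp hs⟩
    · rintro ⟨m', hm', hs⟩
      obtain ⟨m, hm, ht⟩ := (hext _).mpr ⟨m', hm', rfl⟩
      exact ⟨m, hm, (φ.sat_iff_of_hType_eq hφ ht).mpr hs⟩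
  | .and s t, hd => by
    simp only [PSen.depth, max_le_iff] at hd
    simp only [PSen.Sat, sat_iff_of_localTypes_eq h s hd.1, sat_iff_of_localTypes_eq h t hd.2]
  | .not s, hd => by
    simp only [PSen.Sat, sat_iff_of_localTypes_eq h s hd]

theorem tp_eq_of_localTypes_eq {A : Type} {k : ℕ} {w w' : Word A}
    (h : localTypes k w = localTypes k w') : tp k w = tp k w' := by
  ext s
  exact and_congr_right fun hd => s.sat_iff_of_localTypes_eq h (by omega)

theorem hType_congr {A : Type} {N : ℕ} :
    ∀ (k : ℕ) {n : ℕ} {w w' : Word A}, (∀ i ≤ N, w i = w' i) →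
      ∀ {ρ : Fin (n + 1) → ℕ}, (∀ i, ρ i ≤ N) → hType k n w ρ = hType k n w' ρ
  | k, n, w, w', hw, ρ, hρ => by
    have hatom : atomType w ρ = atomType w' ρ := by
      simp only [atomType, funext fun i => hw _ (hρ i)]
    cases k with
    | zero => exact hatom
    | succ k =>
      have hsub : ∀ {v v' : Word A}, (∀ i ≤ N, v i = v' i) →
          {t | ∃ m, v.pos m ∧ m < ρ 0 ∧ hType k (n + 1) v (Fin.snoc ρ m) = t} ⊆
            {t | ∃ m, v'.pos m ∧ m < ρ 0 ∧ hType k (n + 1) v' (Fin.snoc ρ m) = t} := by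
        rintro v v' hv _ ⟨m, hm, hlt, rfl⟩
        have hmN : m ≤ N := hlt.le.trans (hρ 0)
        have hsnoc : ∀ i, (Fin.snoc ρ m : Fin (n + 2) → ℕ) i ≤ N := by
          intro i
          induction i using Fin.lastCases <;> simp [hmN, hρ]
        exact ⟨m, by rwa [Word.pos, ← hv m hmN], hlt, (hType_congr k hv hsnoc).symm⟩
      simp only [hType, hatom]
      exact congrArg _ (hsub hw |>.antisymm (hsub fun i hi => (hw i hi).symm))

theorem Word.take_apply_of_lt {A : Type} {w : Word A} {n i : ℕ} (h : i < n) :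
    w.take n i = w i :=
  if_pos h

theorem Word.pos_take_ofFun_iff {A : Type} {u : ℕ → A} {n m : ℕ} :
    ((Word.ofFun u).take n).pos m ↔ m < n := by
  by_cases h : m < n <;> simp [Word.pos, Word.take, Word.ofFun, h]

theorem Word.ofList_ofFn {A : Type} (u : ℕ → A) (n : ℕ) :
    Word.ofList (List.ofFn fun i : Fin n => u i) = (Word.ofFun u).take n := by
  funext i
  by_cases h : i < n <;> simp [Word.ofList, Word.take, Word.ofFun, h]

def localTypeAt {A : Type} (k : ℕ) (w : Word A) (m : ℕ) : HType A k 0 :=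
  hType k 0 (w.take (m + 1)) (fun _ => m)

theorem localTypes_take_ofFun {A : Type} (k : ℕ) (u : ℕ → A) (n : ℕ) :
    localTypes k ((Word.ofFun u).take (n + 1)) = localTypeAt k (Word.ofFun u) '' Set.Iic n := by
  ext t
  simp only [localTypes, Word.pos_take_ofFun_iff, Nat.lt_succ_iff]
  refine exists_congr fun m => and_congr_right fun hm => ?_
  rw [localTypeAt,
    hType_congr (w' := (Word.ofFun u).take (m + 1)) k (fun i hi => ?_) (fun _ => le_rfl)]
  rw [Word.take_apply_of_lt (by omega), Word.take_apply_of_lt (by omega)]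

theorem exists_image_Iic_eq_range {α : Type*} [Finite α] (f : ℕ → α) :
    ∃ N, ∀ n, N ≤ n → f '' Set.Iic n = Set.range f := by
  choose g hg using fun t : Set.range f => t.2
  obtain ⟨N, hN⟩ := (Set.finite_range g).bddAbove
  refine ⟨N, fun n hn => (Set.image_subset_range _ _).antisymm ?_⟩
  rintro _ ⟨m, rfl⟩
  exact ⟨g ⟨f m, m, rfl⟩, (hN ⟨_, rfl⟩).trans hn, hg _⟩

/-- Every infinite word `u` has a unique stationary type: there
exist a unique `τ ∈ Types_k` and an index `n` such that for every `m ≥ n`,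
`tp_k(u[0…m]) = τ`. -/
theorem stationary_type_exists_unique {A : Type} [Finite A] (k : ℕ) (u : ℕ → A) :
    ∃ τ : Set (PSen A), τ ∈ WTypes A k ∧
      (∃ n : ℕ, ∀ m : ℕ, n ≤ m → tp k (Word.take (Word.ofFun u) (m + 1)) = τ) ∧
      ∀ τ' : Set (PSen A), τ' ∈ WTypes A k →
        (∃ n : ℕ, ∀ m : ℕ, n ≤ m → tp k (Word.take (Word.ofFun u) (m + 1)) = τ') →
        τ' = τ := by
  obtain ⟨N, hN⟩ := exists_image_Iic_eq_range (localTypeAt k (Word.ofFun u))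
  have hstat : ∀ m, N ≤ m → tp k ((Word.ofFun u).take (m + 1)) =
      tp k ((Word.ofFun u).take (N + 1)) := fun m hm =>
    tp_eq_of_localTypes_eq <| by
      rw [localTypes_take_ofFun, localTypes_take_ofFun, hN m hm, hN N le_rfl]
  refine ⟨_, ⟨List.ofFn fun i : Fin (N + 1) => u i, by rw [Word.ofList_ofFn]⟩, ⟨N, hstat⟩,
    ?_⟩
  rintro τ' - ⟨n', hn'⟩
  rw [← hn' _ (le_max_left n' N), hstat _ (le_max_right n' N)]

end PrefSynth
end

section
/- Let k ∈ ℕ, let u be an infinite word over a finite alphabet Σ, and let τ = tp_k(u). Then there exists n ∈ ℕ such that for all m > n, tp_k(u[0…m]) = τ. -/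
set_option maxHeartbeats 1000000

namespace PrefSynth

/-! ### Auxiliary development for Statement 8 -/

/-- Quantifier-free data of a tuple of positions in a word. -/
def QF (A : Type) (n : ℕ) : Type :=
  (Fin n → Fin n → Prop) × (Fin n → Fin n → Prop) × (Fin n → Option A)

instance optionFinite (A : Type) [Finite A] : Finite (Option A) :=
  Finite.of_equiv (A ⊕ PUnit.{1}) (Equiv.optionEquivSumPUnit.{0, 0} A).symm

instance {A : Type} [Finite A] {n : ℕ} : Finite (QF A n) := by
  unfold QF; infer_instance

/-- Ehrenfeucht–Fraïssé style types of rank `r` over `n` variables: a finite type. -/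
def Ty (A : Type) : ℕ → ℕ → Type
  | 0, n => QF A n
  | r + 1, n => QF A n × Set (Ty A r (n + 1))

theorem ty_finite (A : Type) [Finite A] : ∀ r n : ℕ, Finite (Ty A r n)
  | 0, n => inferInstanceAs (Finite (QF A n))
  | r + 1, n =>
      have : Finite (Ty A r (n + 1)) := ty_finite A r (n + 1)
      inferInstanceAs (Finite (QF A n × Set (Ty A r (n + 1))))

instance {A : Type} [Finite A] {r n : ℕ} : Finite (Ty A r n) := ty_finite A r n

/-- The value of the bounding variable in an assignment (0 if no variables). -/
def bnd {n : ℕ} (ρ : Fin n → ℕ) : ℕ :=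
  if h : 0 < n then ρ ⟨0, h⟩ else 0

theorem bnd_eq {n : ℕ} (ρ : Fin (n + 1) → ℕ) : bnd ρ = ρ 0 := by
  simp [bnd]

def qf {A : Type} (w : Word A) {n : ℕ} (ρ : Fin n → ℕ) : QF A n :=
  ⟨fun i j => ρ i = ρ j, fun i j => ρ i < ρ j, fun i => w (ρ i)⟩

/-- The rank-`r` type of an assignment in a word. -/
def etype {A : Type} (w : Word A) : (r : ℕ) → {n : ℕ} → (Fin n → ℕ) → Ty A r n
  | 0, _, ρ => qf w ρ
  | r + 1, _, ρ =>
      (qf w ρ, {t | ∃ m, Word.pos w m ∧ m < bnd ρ ∧ t = etype w r (Fin.snoc ρ m)})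

theorem etype_qf {A : Type} {w w' : Word A} {r n : ℕ} {ρ ρ' : Fin n → ℕ}
    (h : etype w r ρ = etype w' r ρ') : qf w ρ = qf w' ρ' := by
  cases r with
  | zero => exact h
  | succ r => exact congrArg Prod.fst h

/-- Equal `etype`s imply agreement on all formulas of depth at most the rank. -/
theorem etype_sat {A : Type} : ∀ {n : ℕ} (φ : PFm A n) (r : ℕ), φ.depth ≤ r →
    ∀ (w w' : Word A) (ρ : Fin n → ℕ) (ρ' : Fin n → ℕ),
      etype w r ρ = etype w' r ρ' → (PFm.Sat w φ ρ ↔ PFm.Sat w' φ ρ') := by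
  intro n φ
  induction φ with
  | eq i j =>
      intro r _ w w' ρ ρ' h
      have hq := etype_qf h
      have h1 : (fun i j => ρ i = ρ j) = (fun i j => ρ' i = ρ' j) :=
        congrArg Prod.fst hq
      simp only [PFm.Sat]
      exact iff_of_eq (congrFun (congrFun h1 i) j)
  | lt i j =>
      intro r _ w w' ρ ρ' h
      have hq := etype_qf h
      have h1 : (fun i j => ρ i < ρ j) = (fun i j => ρ' i < ρ' j) :=
        congrArg (fun q => q.2.1) hq
      simp only [PFm.Sat]
      exact iff_of_eq (congrFun (congrFun h1 i) j)
  | letter a i =>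
      intro r _ w w' ρ ρ' h
      have hq := etype_qf h
      have h1 : (fun i => w (ρ i)) = (fun i => w' (ρ' i)) :=
        congrArg (fun q => q.2.2) hq
      have h2 : w (ρ i) = w' (ρ' i) := congrFun h1 i
      simp only [PFm.Sat, h2]
  | and φ ψ ih1 ih2 =>
      intro r hd w w' ρ ρ' h
      simp only [PFm.depth, max_le_iff] at hd
      simp only [PFm.Sat]
      rw [ih1 r hd.1 w w' ρ ρ' h, ih2 r hd.2 w w' ρ ρ' h]
  | not φ ih =>
      intro r hd w w' ρ ρ' h
      simp only [PFm.depth] at hd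
      simp only [PFm.Sat]
      rw [ih r hd w w' ρ ρ' h]
  | exlt φ ih =>
      intro r hd w w' ρ ρ' h
      simp only [PFm.depth] at hd
      obtain ⟨r0, rfl⟩ : ∃ r0, r = r0 + 1 :=
        ⟨r - 1, by omega⟩
      have hφ : φ.depth ≤ r0 := by omega
      have hset : {t | ∃ m, Word.pos w m ∧ m < bnd ρ ∧ t = etype w r0 (Fin.snoc ρ m)}
          = {t | ∃ m, Word.pos w' m ∧ m < bnd ρ' ∧ t = etype w' r0 (Fin.snoc ρ' m)} :=
        congrArg Prod.snd h
      simp only [PFm.Sat]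
      constructor
      · rintro ⟨m, hpos, hlt, hsat⟩
        have hmem : etype w r0 (Fin.snoc ρ m) ∈
            {t | ∃ m, Word.pos w m ∧ m < bnd ρ ∧ t = etype w r0 (Fin.snoc ρ m)} :=
          ⟨m, hpos, by rw [bnd_eq]; exact hlt, rfl⟩
        rw [hset] at hmem
        obtain ⟨m', hpos', hlt', heq⟩ := hmem
        exact ⟨m', hpos', by rw [bnd_eq] at hlt'; exact hlt',
          (ih r0 hφ w w' (Fin.snoc ρ m) (Fin.snoc ρ' m') heq).mp hsat⟩
      · rintro ⟨m', hpos', hlt', hsat'⟩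
        have hmem : etype w' r0 (Fin.snoc ρ' m') ∈
            {t | ∃ m, Word.pos w' m ∧ m < bnd ρ' ∧ t = etype w' r0 (Fin.snoc ρ' m)} :=
          ⟨m', hpos', by rw [bnd_eq]; exact hlt', rfl⟩
        rw [← hset] at hmem
        obtain ⟨m, hpos, hlt, heq⟩ := hmem
        exact ⟨m, hpos, by rw [bnd_eq] at hlt; exact hlt,
          (ih r0 hφ w w' (Fin.snoc ρ m) (Fin.snoc ρ' m') heq.symm).mpr hsat'⟩

theorem pos_take {A : Type} (w : Word A) (M m : ℕ) :
    Word.pos (Word.take w M) m ↔ m < M ∧ Word.pos w m := by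
  by_cases h : m < M <;> simp [Word.pos, Word.take, h]

/-- Below the cut, prefixes have the same types. -/
theorem etype_take {A : Type} (u : Word A) (M : ℕ) :
    ∀ (r : ℕ) {n : ℕ} (ρ : Fin n → ℕ), (∀ i, ρ i < M) →
      etype (Word.take u M) r ρ = etype u r ρ := by
  intro r
  induction r with
  | zero =>
      intro n ρ hρ
      show qf (Word.take u M) ρ = qf u ρ
      have h3 : (fun i => Word.take u M (ρ i)) = fun i => u (ρ i) :=
        funext fun i => by simp [Word.take, hρ i]
      simp only [qf]
      rw [h3]
  | succ r ih =>
      intro n ρ hρ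
      show (qf (Word.take u M) ρ, _) = (qf u ρ, _)
      have hqf : qf (Word.take u M) ρ = qf u ρ := by
        have h3 : (fun i => Word.take u M (ρ i)) = fun i => u (ρ i) :=
          funext fun i => by simp [Word.take, hρ i]
        simp only [qf]
        rw [h3]
      refine Prod.ext hqf ?_
      show {t | ∃ m, Word.pos (Word.take u M) m ∧ m < bnd ρ ∧
          t = etype (Word.take u M) r (Fin.snoc ρ m)}
        = {t | ∃ m, Word.pos u m ∧ m < bnd ρ ∧ t = etype u r (Fin.snoc ρ m)}
      have hbnd : ∀ m : ℕ, m < bnd ρ → m < M := by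
        intro m hm
        by_cases h : 0 < n
        · have : bnd ρ = ρ ⟨0, h⟩ := dif_pos h
          calc m < bnd ρ := hm
            _ = ρ ⟨0, h⟩ := this
            _ < M := hρ _
        · simp [bnd, h] at hm
      ext t
      constructor
      · rintro ⟨m, hpos, hlt, rfl⟩
        have hmM : m < M := hbnd m hlt
        have hsnoc : ∀ i, (Fin.snoc ρ m : Fin (n + 1) → ℕ) i < M := by
          intro i
          induction i using Fin.lastCases with
          | last => simpa using hmM
          | cast j => simpa using hρ j
        exact ⟨m, ((pos_take u M m).mp hpos).2, hlt, ih (Fin.snoc ρ m) hsnoc⟩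
      · rintro ⟨m, hpos, hlt, rfl⟩
        have hmM : m < M := hbnd m hlt
        have hsnoc : ∀ i, (Fin.snoc ρ m : Fin (n + 1) → ℕ) i < M := by
          intro i
          induction i using Fin.lastCases with
          | last => simpa using hmM
          | cast j => simpa using hρ j
        exact ⟨m, (pos_take u M m).mpr ⟨hmM, hpos⟩, hlt, (ih (Fin.snoc ρ m) hsnoc).symm⟩

theorem exists_min_bound {β : Type} [Finite β] (f : ℕ → β) :
    ∃ n : ℕ, ∀ m : ℕ, ∃ m' ≤ n, f m' = f m := by
  classical
  let h : β → ℕ := fun b => if hb : ∃ m', f m' = b then Nat.find hb else 0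
  obtain ⟨n, hn⟩ := (Set.finite_range h).bddAbove
  refine ⟨n, fun m => ?_⟩
  have hm : ∃ m', f m' = f m := ⟨m, rfl⟩
  refine ⟨h (f m), hn (Set.mem_range_self (f m)), ?_⟩
  simp only [h, dif_pos hm]
  exact Nat.find_spec hm

/-- For every infinite word `u`, with `τ = tp_k(u)`, there is an
`n` such that for all `m > n`, `tp_k(u[0…m]) = τ`. -/
theorem tp_prefixes_eventually_stationary {A : Type} [Finite A] (k : ℕ)
    (u : ℕ → A) :
    ∃ n : ℕ, ∀ m : ℕ, n < m →
      tp k (Word.take (Word.ofFun u) (m + 1)) = tp k (Word.ofFun u) := by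
  classical
  set w := Word.ofFun u with hw
  have hposw : ∀ m : ℕ, Word.pos w m := by
    intro m; simp [hw, Word.pos, Word.ofFun]
  obtain ⟨n, hn⟩ := exists_min_bound (fun m => etype w k (fun _ : Fin 1 => m))
  refine ⟨n, fun m hm => ?_⟩
  have main : ∀ s : PSen A, s.depth ≤ k →
      (PSen.Sat (Word.take w (m + 1)) s ↔ PSen.Sat w s) := by
    intro s
    induction s with
    | exB φ =>
        intro hd
        simp only [PSen.depth] at hd
        have hφ : φ.depth ≤ k := by omega
        simp only [PSen.Sat]
        constructor
        · rintro ⟨m0, hpos, hsat⟩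
          have hm0 : m0 < m + 1 := ((pos_take w (m+1) m0).mp hpos).1
          have htk : etype (Word.take w (m+1)) k (fun _ : Fin 1 => m0)
              = etype w k (fun _ : Fin 1 => m0) :=
            etype_take w (m+1) k _ (fun _ => hm0)
          exact ⟨m0, hposw m0,
            (etype_sat φ k hφ _ _ _ _ htk).mp hsat⟩
        · rintro ⟨m0, _, hsat⟩
          obtain ⟨m1, hm1n, heq⟩ := hn m0
          have hsat1 : PFm.Sat w φ (fun _ : Fin 1 => m0) ↔
              PFm.Sat w φ (fun _ : Fin 1 => m1) :=
            (etype_sat φ k hφ w w _ _ heq).symm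
          have hm1 : m1 < m + 1 := by omega
          have htk : etype (Word.take w (m+1)) k (fun _ : Fin 1 => m1)
              = etype w k (fun _ : Fin 1 => m1) :=
            etype_take w (m+1) k _ (fun _ => hm1)
          exact ⟨m1, (pos_take w (m+1) m1).mpr ⟨hm1, hposw m1⟩,
            (etype_sat φ k hφ _ _ _ _ htk).mpr (hsat1.mp hsat)⟩
    | and s t ihs iht =>
        intro hd
        simp only [PSen.depth, max_le_iff] at hd
        simp only [PSen.Sat]
        rw [ihs hd.1, iht hd.2]
    | not s ihs =>
        intro hd
        simp only [PSen.depth] at hd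
        simp only [PSen.Sat]
        rw [ihs hd]
  ext s
  simp only [tp, Set.mem_setOf_eq]
  constructor
  · rintro ⟨h1, h2⟩; exact ⟨h1, (main s h1).mp h2⟩
  · rintro ⟨h1, h2⟩; exact ⟨h1, (main s h1).mpr h2⟩


end PrefSynth
end
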